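/- arXiv:1311.1409 — 2 statements merged into one kernel-verified Lean document; each statement's English description precedes it below -/
import Mathlib

section
/- (Motzkin–Straus) If G is a 2-uniform graph on n vertices whose largest clique has order t, then λ(G) = (1/2)(1 − 1/t). Furthermore, the weighting assigning 1/t to each vertex of a fixed maximum clique and 0 to all other vertices is an optimal weighting. -/
open Finset

/-- The polynomial λ(G, w) = Σ_{e ∈ E} Π_{i ∈ e} w i. -/
def lagPoly (E : Finset (Finset ℕ)) (w : ℕ → ℝ) : ℝ :=
  ∑ e ∈ E, ∏ i ∈ e, w i

/-- A feasible weighting on vertex set [n] = {0, …, n-1}. -/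
def IsWeighting (n : ℕ) (w : ℕ → ℝ) : Prop :=
  (∀ i, 0 ≤ w i) ∧ (∀ i, n ≤ i → w i = 0) ∧ ∑ i ∈ Finset.range n, w i = 1

/-- The Lagrangian of a hypergraph with edge set `E`. -/
noncomputable def lag (E : Finset (Finset ℕ)) : ℝ :=
  sSup {x | ∃ n w, IsWeighting n w ∧ x = lagPoly E w}

/-- The complete r-uniform hypergraph on vertex set {0, …, t-1}. -/
def completeG (t r : ℕ) : Finset (Finset ℕ) :=
  (Finset.range t).powersetCard r

/-! If two vertices `i`, `j` carrying positive weight are not adjacent, no edge contains both,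
so `lagPoly E` is affine along `e_i - e_j`; moving all the weight of one of them onto the other,
in the better direction, does not decrease it and shrinks the support. Hence it suffices to
bound `lagPoly E` for weightings supported on a clique `F`, where it equals
`((∑ w)² - ∑ w²) / 2`, which is at most `(1 - 1/|F|) / 2` by Cauchy–Schwarz. The uniform
weighting on a maximum clique attains the bound. -/

section LagPoly

variable {E E' : Finset (Finset ℕ)} {w w' : ℕ → ℝ}

lemma lagPoly_congr (h : ∀ e ∈ E, ∀ i ∈ e, w i = w' i) : lagPoly E w = lagPoly E w' :=
  sum_congr rfl fun e he => prod_congr rfl (h e he)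

lemma lagPoly_mono (hw : ∀ i, 0 ≤ w i) (h : E ⊆ E') : lagPoly E w ≤ lagPoly E' w :=
  sum_le_sum_of_subset_of_nonneg h fun _ _ _ => prod_nonneg fun i _ => hw i

lemma lagPoly_filter_subset {F : Finset ℕ} (hF : ∀ i ∉ F, w i = 0) :
    lagPoly (E.filter (· ⊆ F)) w = lagPoly E w :=
  sum_filter_of_ne fun _ _ he i hi => by_contra fun hiF => prod_ne_zero_iff.1 he i hi (hF i hiF)

lemma lagPoly_powersetCard_two (A : Finset ℕ) (w : ℕ → ℝ) :
    lagPoly (A.powersetCard 2) w = ((∑ i ∈ A, w i) ^ 2 - ∑ i ∈ A, w i ^ 2) / 2 := by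
  induction A using Finset.induction_on with
  | empty => rw [lagPoly, powersetCard_eq_empty.2 (by simp)]; simp
  | @insert a A ha ih =>
    have hdisj : Disjoint (A.powersetCard 2) ((A.powersetCard 1).image (insert a)) :=
      disjoint_right.2 fun e he he' => by
        obtain ⟨e', -, rfl⟩ := mem_image.1 he
        exact ha ((mem_powersetCard.1 he').1 (mem_insert_self a e'))
    have hnew : lagPoly ((A.powersetCard 1).image (insert a)) w = w a * ∑ i ∈ A, w i := by
      have hinj : Set.InjOn (insert a) (A.powersetCard 1 : Set (Finset ℕ)) :=
        fun e he e' he' h => by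
          rw [← erase_insert fun h => ha ((mem_powersetCard.1 he).1 h), h,
            erase_insert fun h => ha ((mem_powersetCard.1 he').1 h)]
      rw [lagPoly, sum_image hinj, powersetCard_one, sum_map, mul_sum]
      refine sum_congr rfl fun i hi => ?_
      have hai : a ≠ i := fun h => ha (h ▸ hi)
      simp [prod_pair hai]
    rw [powersetCard_succ_insert ha, lagPoly, sum_union hdisj, ← lagPoly, ← lagPoly, hnew, ih,
      sum_insert ha, sum_insert ha]
    ring

lemma lagPoly_powersetCard_two_le {A : Finset ℕ} {t : ℕ} (ht : 0 < t) (hA : #A ≤ t)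
    (w : ℕ → ℝ) : lagPoly (A.powersetCard 2) w ≤ (1 - 1 / (t : ℝ)) / 2 * (∑ i ∈ A, w i) ^ 2 := by
  have htR : (0 : ℝ) < t := by exact_mod_cast ht
  have hcs : (∑ i ∈ A, w i) ^ 2 ≤ t * ∑ i ∈ A, w i ^ 2 :=
    sq_sum_le_card_mul_sum_sq.trans <|
      mul_le_mul_of_nonneg_right (by exact_mod_cast hA) (sum_nonneg fun i _ => sq_nonneg _)
  have hsq : (∑ i ∈ A, w i) ^ 2 / t ≤ ∑ i ∈ A, w i ^ 2 := by rwa [div_le_iff₀' htR]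
  rw [lagPoly_powersetCard_two]
  calc _ ≤ ((∑ i ∈ A, w i) ^ 2 - (∑ i ∈ A, w i) ^ 2 / t) / 2 := by gcongr
    _ = _ := by ring

end LagPoly

/-- The partial derivative `∂ lagPoly E w / ∂ w i`. -/
def linkPoly (E : Finset (Finset ℕ)) (w : ℕ → ℝ) (i : ℕ) : ℝ :=
  ∑ e ∈ E with i ∈ e, ∏ k ∈ e.erase i, w k

section Transfer

variable {E : Finset (Finset ℕ)} {V : Finset ℕ} {w : ℕ → ℝ} {i j : ℕ}

lemma prod_add_smul_sub_single {e : Finset ℕ} (he : ¬(i ∈ e ∧ j ∈ e)) (c : ℝ) :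
    ∏ k ∈ e, (w + c • (Pi.single i 1 - Pi.single j 1 : ℕ → ℝ)) k = ∏ k ∈ e, w k
      + c * ((if i ∈ e then ∏ k ∈ e.erase i, w k else 0)
        - if j ∈ e then ∏ k ∈ e.erase j, w k else 0) := by
  have hout : ∀ k, k ≠ i → k ≠ j → (w + c • (Pi.single i 1 - Pi.single j 1 : ℕ → ℝ)) k = w k := by
    intro k hki hkj
    simp [hki, hkj]
  by_cases hi : i ∈ e
  · have hj : j ∉ e := fun hj => he ⟨hi, hj⟩
    have hij : i ≠ j := fun h => hj (h ▸ hi)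
    rw [← mul_prod_erase e _ hi, ← mul_prod_erase e w hi,
      prod_congr rfl fun k hk => hout k (ne_of_mem_erase hk) fun h => hj (h ▸ mem_of_mem_erase hk)]
    simp [hi, hj, hij]
    ring
  by_cases hj : j ∈ e
  · have hij : j ≠ i := fun h => hi (h ▸ hj)
    rw [← mul_prod_erase e _ hj, ← mul_prod_erase e w hj,
      prod_congr rfl fun k hk =>
        hout k (fun h => hi (h ▸ mem_of_mem_erase hk)) (ne_of_mem_erase hk)]
    simp [hi, hj, hij]
    ring
  · rw [prod_congr rfl fun k hk => hout k (fun h => hi (h ▸ hk)) fun h => hj (h ▸ hk)]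
    simp [hi, hj]

lemma lagPoly_add_smul_sub_single (hij : ∀ e ∈ E, ¬(i ∈ e ∧ j ∈ e)) (c : ℝ) :
    lagPoly E (w + c • (Pi.single i 1 - Pi.single j 1 : ℕ → ℝ))
      = lagPoly E w + c * (linkPoly E w i - linkPoly E w j) := by
  simp only [lagPoly, linkPoly, sum_filter, mul_sub, mul_sum]
  rw [sum_congr rfl fun e he => prod_add_smul_sub_single (hij e he) c]
  simp only [sum_add_distrib, mul_sub, sum_sub_distrib]

-- The witness moves all the weight of `j` onto `i`, or of `i` onto `j`.
lemma exists_transfer (hw : ∀ k, 0 ≤ w k) (hwV : ∀ k ∉ V, w k = 0)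
    (hi : i ∈ V) (hj : j ∈ V) (hwi : w i ≠ 0) (hwj : w j ≠ 0) (hij : i ≠ j)
    (hE : ∀ e ∈ E, ¬(i ∈ e ∧ j ∈ e)) :
    ∃ w' : ℕ → ℝ, (∀ k, 0 ≤ w' k) ∧ (∀ k ∉ V, w' k = 0) ∧ ∑ k ∈ V, w' k = ∑ k ∈ V, w k ∧
      #{k ∈ V | w' k ≠ 0} < #{k ∈ V | w k ≠ 0} ∧ lagPoly E w ≤ lagPoly E w' := by
  wlog h : linkPoly E w j ≤ linkPoly E w i generalizing i j
  · exact this hj hi hwj hwi hij.symm (fun e he hji => hE e he hji.symm) (le_of_not_ge h)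
  set w' := w + w j • (Pi.single i 1 - Pi.single j 1 : ℕ → ℝ)
  have hw'i : w' i = w i + w j := by simp [w', hij]
  have hw'j : w' j = 0 := by simp [w', hij.symm]
  have hw'k : ∀ k, k ≠ i → k ≠ j → w' k = w k := fun k hki hkj => by simp [w', hki, hkj]
  refine ⟨w', fun k => ?_, fun k hk => ?_, ?_, ?_, ?_⟩
  · by_cases hki : k = i
    · rw [hki, hw'i]; exact add_nonneg (hw i) (hw j)
    by_cases hkj : k = j
    · rw [hkj, hw'j]
    rw [hw'k k hki hkj]; exact hw k
  · rw [hw'k k (fun h => hk (h ▸ hi)) fun h => hk (h ▸ hj), hwV k hk]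
  · simp [w', sum_add_distrib, sum_sub_distrib, ← mul_sum, hi, hj]
  · refine (card_le_card fun k hk => ?_).trans_lt (card_erase_lt_of_mem (mem_filter.2 ⟨hj, hwj⟩))
    obtain ⟨hkV, hk0⟩ := mem_filter.1 hk
    have hkj : k ≠ j := fun h => hk0 (h ▸ hw'j)
    refine mem_erase.2 ⟨hkj, mem_filter.2 ⟨hkV, ?_⟩⟩
    by_cases hki : k = i
    · exact hki ▸ hwi
    · rwa [hw'k k hki hkj] at hk0
  · rw [lagPoly_add_smul_sub_single hE]
    exact le_add_of_nonneg_right (mul_nonneg (hw j) (sub_nonneg.2 h))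

end Transfer

section Reduction

variable {E : Finset (Finset ℕ)} {V : Finset ℕ} {w : ℕ → ℝ}

lemma exists_lagPoly_le_of_support_pairs_covered (hw : ∀ k, 0 ≤ w k) (hwV : ∀ k ∉ V, w k = 0) :
    ∃ w' : ℕ → ℝ, (∀ k, 0 ≤ w' k) ∧ (∀ k ∉ V, w' k = 0) ∧ ∑ k ∈ V, w' k = ∑ k ∈ V, w k ∧
      (∀ i ∈ {k ∈ V | w' k ≠ 0}, ∀ j ∈ {k ∈ V | w' k ≠ 0}, i ≠ j → ∃ e ∈ E, i ∈ e ∧ j ∈ e) ∧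
      lagPoly E w ≤ lagPoly E w' := by
  induction hk : #{k ∈ V | w k ≠ 0} using Nat.strong_induction_on generalizing w with
  | _ k ih =>
  by_cases hcov : ∀ i ∈ {k ∈ V | w k ≠ 0}, ∀ j ∈ {k ∈ V | w k ≠ 0}, i ≠ j →
      ∃ e ∈ E, i ∈ e ∧ j ∈ e
  · exact ⟨w, hw, hwV, rfl, hcov, le_rfl⟩
  push Not at hcov
  obtain ⟨i, hi, j, hj, hij, hnone⟩ := hcov
  obtain ⟨w₁, hw₁, hw₁V, hsum₁, hlt, hle₁⟩ := exists_transfer hw hwV (mem_filter.1 hi).1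
    (mem_filter.1 hj).1 (mem_filter.1 hi).2 (mem_filter.1 hj).2 hij
    fun e he hije => hnone e he hije.1 hije.2
  obtain ⟨w₂, hw₂, hw₂V, hsum₂, hcov₂, hle₂⟩ := ih _ (hk ▸ hlt) hw₁ hw₁V rfl
  exact ⟨w₂, hw₂, hw₂V, hsum₂.trans hsum₁, hcov₂, hle₁.trans hle₂⟩

lemma powersetCard_two_subset_of_pairs_covered (hE : ∀ e ∈ E, #e = 2) {F : Finset ℕ}
    (hF : ∀ i ∈ F, ∀ j ∈ F, i ≠ j → ∃ e ∈ E, i ∈ e ∧ j ∈ e) : F.powersetCard 2 ⊆ E := by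
  intro p hp
  obtain ⟨hpF, hp2⟩ := mem_powersetCard.1 hp
  obtain ⟨x, y, hxy, rfl⟩ := card_eq_two.1 hp2
  obtain ⟨e, he, hx, hy⟩ := hF x (hpF (mem_insert_self x {y})) y (hpF (by simp)) hxy
  have hxye : {x, y} ⊆ e := insert_subset hx (singleton_subset_iff.2 hy)
  rwa [eq_of_subset_of_card_le hxye (by rw [hE e he, card_pair hxy])]

lemma lagPoly_le_of_clique_card_le {t : ℕ} (ht : 0 < t) (hE : ∀ e ∈ E, #e = 2)
    (hmax : ∀ s ⊆ V, s.powersetCard 2 ⊆ E → #s ≤ t) (hw : ∀ k, 0 ≤ w k)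
    (hwV : ∀ k ∉ V, w k = 0) (hsum : ∑ k ∈ V, w k ≤ 1) :
    lagPoly E w ≤ (1 - 1 / (t : ℝ)) / 2 := by
  obtain ⟨w', hw', hw'V, hsum', hcov, hle⟩ := exists_lagPoly_le_of_support_pairs_covered hw hwV
  set F := {k ∈ V | w' k ≠ 0}
  have hw'F : ∀ k ∉ F, w' k = 0 := fun k hk => by_contra fun h =>
    hk (mem_filter.2 ⟨by_contra fun hkV => h (hw'V k hkV), h⟩)
  have hσ : ∑ k ∈ F, w' k = ∑ k ∈ V, w k := (sum_filter_ne_zero _).trans hsum'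
  have hσ0 : 0 ≤ ∑ k ∈ F, w' k := sum_nonneg fun k _ => hw' k
  have ht1 : 0 ≤ 1 - 1 / (t : ℝ) :=
    sub_nonneg.2 (div_le_one_of_le₀ (by exact_mod_cast ht) t.cast_nonneg)
  calc lagPoly E w ≤ lagPoly E w' := hle
    _ = lagPoly (E.filter (· ⊆ F)) w' := (lagPoly_filter_subset hw'F).symm
    _ ≤ lagPoly (F.powersetCard 2) w' := lagPoly_mono hw' fun e he =>
        mem_powersetCard.2 ⟨(mem_filter.1 he).2, hE e (mem_filter.1 he).1⟩
    _ ≤ (1 - 1 / (t : ℝ)) / 2 * (∑ k ∈ F, w' k) ^ 2 := lagPoly_powersetCard_two_le ht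
        (hmax F (filter_subset _ _) (powersetCard_two_subset_of_pairs_covered hE hcov)) w'
    _ ≤ (1 - 1 / (t : ℝ)) / 2 :=
        mul_le_of_le_one_right (div_nonneg ht1 zero_le_two) (pow_le_one₀ hσ0 (hσ ▸ hsum))

end Reduction

section Weighting

variable {E : Finset (Finset ℕ)} {s V : Finset ℕ} {m : ℕ} {w : ℕ → ℝ}

lemma IsWeighting.sum_le_one (hw : IsWeighting m w) : ∑ i ∈ V, w i ≤ 1 := by
  obtain ⟨hw0, hwm, hw1⟩ := hw
  calc ∑ i ∈ V, w i ≤ ∑ i ∈ V ∪ range m, w i :=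
        sum_le_sum_of_subset_of_nonneg subset_union_left fun i _ _ => hw0 i
    _ = 1 := hw1 ▸ (sum_subset subset_union_right fun i _ hi => hwm i (by simpa using hi)).symm

lemma lagPoly_le_of_isWeighting {t : ℕ} (ht : 0 < t) (hE : E ⊆ V.powersetCard 2)
    (hmax : ∀ s ⊆ V, s.powersetCard 2 ⊆ E → #s ≤ t) (hw : IsWeighting m w) :
    lagPoly E w ≤ (1 - 1 / (t : ℝ)) / 2 := by
  have hrestrict : lagPoly E w = lagPoly E fun i => if i ∈ V then w i else 0 :=
    lagPoly_congr fun e he i hi => (if_pos ((mem_powersetCard.1 (hE he)).1 hi)).symm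
  rw [hrestrict]
  refine lagPoly_le_of_clique_card_le ht (fun e he => (mem_powersetCard.1 (hE he)).2) hmax
    (fun i => ?_) (fun i hi => if_neg hi) ?_
  · split_ifs
    exacts [hw.1 i, le_rfl]
  · rw [sum_ite_mem, inter_self]
    exact hw.sum_le_one

lemma isWeighting_uniform (hs : s ⊆ range m) (hs0 : 0 < #s) :
    IsWeighting m fun i => if i ∈ s then 1 / (#s : ℝ) else 0 := by
  refine ⟨fun i => ?_, fun i hi => if_neg fun his => ?_, ?_⟩
  · dsimp only
    split_ifs <;> positivity
  · exact absurd (mem_range.1 (hs his)) (not_lt.2 hi)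
  · rw [sum_ite_mem, inter_eq_right.2 hs, sum_const, nsmul_eq_mul]
    field_simp

lemma lagPoly_uniform_clique (hE : ∀ e ∈ E, #e = 2) (hs : s.powersetCard 2 ⊆ E) (hs0 : 0 < #s) :
    lagPoly E (fun i => if i ∈ s then 1 / (#s : ℝ) else 0) = (1 - 1 / (#s : ℝ)) / 2 := by
  have hedges : E.filter (· ⊆ s) = s.powersetCard 2 := by
    ext e
    simp only [mem_filter, mem_powersetCard]
    exact ⟨fun ⟨he, hes⟩ => ⟨hes, hE e he⟩, fun he => ⟨hs (mem_powersetCard.2 he), he.1⟩⟩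
  rw [← lagPoly_filter_subset (F := s) fun i hi => if_neg hi, hedges, lagPoly_powersetCard_two,
    sum_ite_mem, inter_self, sum_const, sum_congr rfl fun i hi => by rw [if_pos hi], sum_const,
    nsmul_eq_mul, nsmul_eq_mul]
  have : (#s : ℝ) ≠ 0 := by positivity
  field_simp

end Weighting

/-- Motzkin–Straus: if the largest clique of a 2-graph G has order t, then
λ(G) = (1/2)(1 - 1/t), attained by the uniform weighting on a maximum clique. -/
theorem stmt_2 (n t : ℕ) (ht : 0 < t) (E : Finset (Finset ℕ))
    (hE : E ⊆ (Finset.range n).powersetCard 2)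
    (s : Finset ℕ) (hs : s ⊆ Finset.range n) (hscard : s.card = t)
    (hsclique : s.powersetCard 2 ⊆ E)
    (hmax : ∀ s' : Finset ℕ, s' ⊆ Finset.range n → s'.powersetCard 2 ⊆ E → s'.card ≤ t) :
    lag E = (1 / 2) * (1 - 1 / (t : ℝ)) ∧
    lagPoly E (fun i => if i ∈ s then (1 : ℝ) / t else 0) = lag E := by
  subst hscard
  have hval := lagPoly_uniform_clique (fun e he => (mem_powersetCard.1 (hE he)).2) hsclique ht
  have hlag : lag E = (1 - 1 / (#s : ℝ)) / 2 :=
    IsGreatest.csSup_eq ⟨⟨n, _, isWeighting_uniform hs ht, hval.symm⟩,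
      by rintro _ ⟨m, w, hw, rfl⟩; exact lagPoly_le_of_isWeighting ht hE hmax hw⟩
  exact ⟨by rw [hlag]; ring, by rw [hval, hlag]⟩
end

section
/- Let t ≥ r+1 and m = C(t−1, r) + C(t−2, r−1) + 1. Then λ(C_{r,m}) > λ([t−1]^{(r)}). -/
open Finset

/-- Binary encoding of a finite set; A < B in colex order iff binVal A < binVal B. -/
def binVal (A : Finset ℕ) : ℕ := ∑ i ∈ A, 2 ^ i

/-- C_{r,m}: the r-graph consisting of the first m r-sets in the colex ordering. -/
def colexGraph (r m : ℕ) : Finset (Finset ℕ) :=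
  ((Finset.range (r + m)).powersetCard r).filter
    (fun A => (((Finset.range (r + m)).powersetCard r).filter
      (fun B => binVal B < binVal A)).card < m)


/-!
The upper bound `λ([n]^{(r)}) ≤ C(n, r) / n^r` is Maclaurin's inequality
`e_r(w) ≤ C(n, r) (Σ w / n)^r`, proved by induction on the vertex set: adding a vertex of weight
`x` to `n` vertices of mean weight `a` is controlled by the tangent line of `y ↦ y^(r+1)` at `a`.

For the lower bound, write `t = n + 2`. Since colex order is the order of binary values, the first
`m` sets of `C_{r,m}` are the `r`-subsets of `{0, …, n}`, the sets `{n+1} ∪ e` with `e` an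
`(r-1)`-subset of `{0, …, n-1}`, and `{n, n+1} ∪ {0, …, r-3}`. On the witness weighting the first
two parts together give exactly `C(n+1, r) / (n+1)^r`, since the weight removed from vertex `n`
reappears on vertex `n+1`, and the last set adds `1 / (4 (n+1)^r)`.
-/

section FinsetFamilies

variable {α : Type*}

lemma notMem_of_mem_powersetCard {s e : Finset α} {a : α} {r : ℕ} (ha : a ∉ s)
    (he : e ∈ s.powersetCard r) : a ∉ e :=
  fun hae => ha ((mem_powersetCard.1 he).1 hae)

variable [DecidableEq α]

lemma injOn_insert {E : Finset (Finset α)} {a : α} (h : ∀ e ∈ E, a ∉ e) :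
    Set.InjOn (insert a) (E : Set (Finset α)) :=
  insert_erase_invOn.2.injOn.mono fun e he => h e he

lemma disjoint_image_insert {E F : Finset (Finset α)} {a : α} (h : ∀ e ∈ E, a ∉ e) :
    Disjoint E (F.image (insert a)) := by
  rw [disjoint_right]
  intro _ he' he
  obtain ⟨f, -, rfl⟩ := mem_image.1 he'
  exact h _ he (mem_insert_self a f)

lemma mem_image_insert_iff {E : Finset (Finset α)} {a : α} (h : ∀ e ∈ E, a ∉ e)
    {A : Finset α} : A ∈ E.image (insert a) ↔ a ∈ A ∧ A.erase a ∈ E := by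
  constructor
  · intro hA
    obtain ⟨e, he, rfl⟩ := mem_image.1 hA
    exact ⟨mem_insert_self a e, by rwa [erase_insert (h e he)]⟩
  · rintro ⟨ha, hA⟩
    exact mem_image.2 ⟨_, hA, insert_erase ha⟩

end FinsetFamilies

lemma choose_mul_pow_add_le (n r : ℕ) {a x : ℝ} (ha : 0 ≤ a) (hx : 0 ≤ x) :
    n.choose (r + 1) * a ^ (r + 1) + x * (n.choose r * a ^ r)
      ≤ (n + 1).choose (r + 1) * ((n * a + x) / (n + 1)) ^ (r + 1) := by
  set b := (n * a + x) / (n + 1)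
  have hb : (n + 1) * b = n * a + x := mul_div_cancel₀ _ (by positivity)
  have hb0 : 0 ≤ b := by positivity
  clear_value b
  have hC : ((n + 1).choose (r + 1) : ℝ) = n.choose r + n.choose (r + 1) := by
    exact_mod_cast Nat.choose_succ_succ' n r
  have hC' : ((n + 1).choose (r + 1) : ℝ) * (r + 1) = (n + 1) * n.choose r := by
    exact_mod_cast (Nat.add_one_mul_choose_eq n r).symm
  have htangent : a ^ (r + 1) + (r + 1) * a ^ r * (b - a) ≤ b ^ (r + 1) := by
    simpa using pow_add_mul_le_add_pow ha (by linarith : 0 ≤ 2 * a + (b - a)) (r + 1)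
  calc n.choose (r + 1) * a ^ (r + 1) + x * (n.choose r * a ^ r)
      = (n + 1).choose (r + 1) * (a ^ (r + 1) + (r + 1) * a ^ r * (b - a)) := by
        linear_combination (-a ^ (r + 1)) * hC - a ^ r * (b - a) * hC'
          - n.choose r * a ^ r * hb
    _ ≤ (n + 1).choose (r + 1) * b ^ (r + 1) := by gcongr

lemma lagPoly_union {E F : Finset (Finset ℕ)} (h : Disjoint E F) (w : ℕ → ℝ) :
    lagPoly (E ∪ F) w = lagPoly E w + lagPoly F w :=
  sum_union h

lemma lagPoly_image_insert {E : Finset (Finset ℕ)} {a : ℕ} (h : ∀ e ∈ E, a ∉ e) (w : ℕ → ℝ) :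
    lagPoly (E.image (insert a)) w = w a * lagPoly E w := by
  rw [lagPoly, sum_image (injOn_insert h), lagPoly, mul_sum]
  exact sum_congr rfl fun e he => prod_insert (h e he)

lemma lagPoly_powersetCard_succ_insert {s : Finset ℕ} {a : ℕ} (ha : a ∉ s) (r : ℕ)
    (w : ℕ → ℝ) :
    lagPoly ((insert a s).powersetCard (r + 1)) w
      = lagPoly (s.powersetCard (r + 1)) w + w a * lagPoly (s.powersetCard r) w := by
  rw [powersetCard_succ_insert ha,
    lagPoly_union (disjoint_image_insert fun e => notMem_of_mem_powersetCard ha),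
    lagPoly_image_insert fun e => notMem_of_mem_powersetCard ha]

lemma lagPoly_powersetCard_of_eqOn {s : Finset ℕ} {w : ℕ → ℝ} {c : ℝ} (h : ∀ i ∈ s, w i = c)
    (r : ℕ) :
    lagPoly (s.powersetCard r) w = (#s).choose r * c ^ r := by
  rw [lagPoly, sum_congr rfl fun e he => (prod_congr rfl fun i hi =>
      h i ((mem_powersetCard.1 he).1 hi)).trans (prod_const c), sum_powersetCard, nsmul_eq_mul]

theorem lagPoly_powersetCard_le {w : ℕ → ℝ} (hw : ∀ i, 0 ≤ w i) (s : Finset ℕ) (r : ℕ) :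
    lagPoly (s.powersetCard r) w ≤ (#s).choose r * ((∑ i ∈ s, w i) / #s) ^ r := by
  induction s using Finset.induction_on generalizing r with
  | empty =>
    cases r with
    | zero => simp [lagPoly]
    | succ r => simp [lagPoly, powersetCard_eq_empty.2 (by simp : #(∅ : Finset ℕ) < r + 1)]
  | insert a s ha ih =>
    cases r with
    | zero => simp [lagPoly]
    | succ r =>
      set S := ∑ i ∈ s, w i
      have hmean : (#s : ℝ) * (S / #s) = S := by
        rcases eq_or_ne #s 0 with h | h
        · simp [S, card_eq_zero.1 h]
        · field_simp
      have hstep := choose_mul_pow_add_le #s r (a := S / #s)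
        (div_nonneg (sum_nonneg fun i _ => hw i) (Nat.cast_nonneg _)) (hw a)
      rw [hmean] at hstep
      rw [lagPoly_powersetCard_succ_insert ha, card_insert_of_notMem ha, sum_insert ha,
        add_comm (w a)]
      push_cast
      exact (add_le_add (ih (r + 1)) (mul_le_mul_of_nonneg_left (ih r) (hw a))).trans hstep

namespace IsWeighting

variable {n : ℕ} {w : ℕ → ℝ}

lemma sum_le_one_s6 (hw : IsWeighting n w) (s : Finset ℕ) : ∑ i ∈ s, w i ≤ 1 := by
  obtain ⟨hw0, hw_zero, hw_sum⟩ := hw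
  calc ∑ i ∈ s, w i ≤ ∑ i ∈ s ∪ range n, w i :=
        sum_le_sum_of_subset_of_nonneg subset_union_left fun i _ _ => hw0 i
    _ = ∑ i ∈ range n, w i :=
        (sum_subset subset_union_right fun i _ hi => hw_zero i (by simpa using hi)).symm
    _ = 1 := hw_sum

lemma le_one (hw : IsWeighting n w) (i : ℕ) : w i ≤ 1 := by
  simpa using hw.sum_le_one_s6 {i}

lemma lagPoly_le_card (hw : IsWeighting n w) (E : Finset (Finset ℕ)) : lagPoly E w ≤ #E := by
  calc lagPoly E w ≤ ∑ _e ∈ E, (1 : ℝ) :=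
        sum_le_sum fun e _ => prod_le_one (fun i _ => hw.1 i) fun i _ => hw.le_one i
    _ = #E := by simp

end IsWeighting

lemma lagPoly_le_lag (E : Finset (Finset ℕ)) {n : ℕ} {w : ℕ → ℝ} (hw : IsWeighting n w) :
    lagPoly E w ≤ lag E :=
  le_csSup ⟨#E, by rintro _ ⟨m, v, hv, rfl⟩; exact hv.lagPoly_le_card E⟩ ⟨n, w, hw, rfl⟩

theorem lag_completeG_le (n r : ℕ) : lag (completeG n r) ≤ n.choose r * (1 / n) ^ r := by
  refine Real.sSup_le ?_ (by positivity)
  rintro _ ⟨m, w, hw, rfl⟩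
  have hmean : (∑ i ∈ range n, w i) / n ≤ 1 / n :=
    div_le_div_of_nonneg_right (hw.sum_le_one_s6 _) (Nat.cast_nonneg n)
  calc lagPoly (completeG n r) w ≤ n.choose r * ((∑ i ∈ range n, w i) / n) ^ r := by
        simpa [completeG] using lagPoly_powersetCard_le hw.1 (range n) r
    _ ≤ n.choose r * (1 / n) ^ r := by
        gcongr
        exact div_nonneg (sum_nonneg fun i _ => hw.1 i) (Nat.cast_nonneg n)

lemma binVal_lt_two_pow_iff {A : Finset ℕ} {a : ℕ} : binVal A < 2 ^ a ↔ A ⊆ range a := by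
  constructor
  · intro h i hi
    by_contra hia
    have : 2 ^ a ≤ binVal A :=
      (Nat.pow_le_pow_right two_pos (not_lt.1 (mt mem_range.2 hia))).trans
        (single_le_sum (fun j _ => Nat.zero_le _) hi)
    omega
  · intro h
    calc binVal A ≤ ∑ i ∈ range a, 2 ^ i := sum_le_sum_of_subset h
      _ < 2 ^ a := Nat.geomSum_lt le_rfl (by simp)

lemma binVal_insert {A : Finset ℕ} {a : ℕ} (h : a ∉ A) :
    binVal (insert a A) = 2 ^ a + binVal A :=
  sum_insert h

lemma binVal_le_two_pow_add_iff {A : Finset ℕ} {a c : ℕ} (hc : c < 2 ^ a) :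
    binVal A ≤ 2 ^ a + c ↔ A ⊆ range a ∨ a ∈ A ∧ binVal (A.erase a) ≤ c := by
  have herase : a ∈ A → binVal A = 2 ^ a + binVal (A.erase a) := fun ha => by
    rw [← binVal_insert (notMem_erase a A), insert_erase ha]
  constructor
  · intro h
    by_cases ha : a ∈ A
    · have := herase ha
      exact Or.inr ⟨ha, by omega⟩
    · have hsub : A ⊆ range (a + 1) := binVal_lt_two_pow_iff.1 (by rw [pow_succ]; omega)
      rw [range_add_one, subset_insert_iff, erase_eq_of_notMem ha] at hsub
      exact Or.inl hsub
  · rintro (h | ⟨ha, h⟩)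
    · have := binVal_lt_two_pow_iff.2 h
      omega
    · have := herase ha
      omega

lemma binVal_le_binVal_range_iff {C : Finset ℕ} {k : ℕ} (hC : #C = k) :
    binVal C ≤ binVal (range k) ↔ C = range k := by
  refine ⟨fun h => eq_of_subset_of_card_le ?_ (by simp [hC]), fun h => h ▸ le_rfl⟩
  exact binVal_lt_two_pow_iff.1 (h.trans_lt (binVal_lt_two_pow_iff.2 subset_rfl))

lemma filter_card_filter_lt_eq_of_sublevel {α β : Type*} [DecidableEq α] [LinearOrder β]
    {U E : Finset α} {f : α → β} {m : ℕ} {V : β} (hEU : E ⊆ U) (hE : #E = m)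
    (hsub : ∀ A ∈ U, A ∈ E ↔ f A ≤ V) :
    U.filter (fun A => #(U.filter fun B => f B < f A) < m) = E := by
  ext A
  simp only [mem_filter]
  constructor
  · rintro ⟨hAU, hpred⟩
    by_contra hAE
    have hVA : V < f A := lt_of_not_ge (mt (hsub A hAU).2 hAE)
    have : E ⊆ U.filter fun B => f B < f A := fun B hB =>
      mem_filter.2 ⟨hEU hB, ((hsub B (hEU hB)).1 hB).trans_lt hVA⟩
    have := card_le_card this
    omega
  · intro hAE
    refine ⟨hEU hAE, ?_⟩
    have : (U.filter fun B => f B < f A) ⊆ E.erase A := by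
      intro B hB
      obtain ⟨hBU, hBA⟩ := mem_filter.1 hB
      exact mem_erase.2 ⟨ne_of_apply_ne f hBA.ne,
        (hsub B hBU).2 (hBA.le.trans ((hsub A (hEU hAE)).1 hAE))⟩
    have := card_le_card this
    rw [card_erase_of_mem hAE, hE] at this
    have : 0 < m := hE ▸ card_pos.2 ⟨A, hAE⟩
    omega

/-- The first `C(n, k + 1) + 1` sets of size `k + 1` in colex order. -/
def colexLink (n k : ℕ) : Finset (Finset ℕ) :=
  (range n).powersetCard (k + 1) ∪ {insert n (range k)}

/-- `C_{k+2, m}` for `t = n + 2`, on the vertex set `{0, …, n + 1}`. -/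
def colexFamily (n k : ℕ) : Finset (Finset ℕ) :=
  (range (n + 1)).powersetCard (k + 2) ∪ (colexLink n k).image (insert (n + 1))

section ColexFamily

variable {n k : ℕ}

lemma notMem_of_mem_colexLink (hk : k ≤ n) {e : Finset ℕ} (he : e ∈ colexLink n k) :
    n + 1 ∉ e := by
  rcases mem_union.1 he with he | he
  · exact notMem_of_mem_powersetCard (by simp) he
  · rw [mem_singleton.1 he]
    simp only [mem_insert, mem_range]
    omega

lemma disjoint_powersetCard_range_insert :
    Disjoint ((range n).powersetCard (k + 1)) {insert n (range k)} :=
  disjoint_singleton_right.2 fun h => notMem_of_mem_powersetCard (by simp) h (mem_insert_self _ _)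

lemma mem_colexLink_iff (hk : k ≤ n) {B : Finset ℕ} (hB : #B = k + 1) :
    B ∈ colexLink n k ↔ binVal B ≤ 2 ^ n + binVal (range k) := by
  have hlt : binVal (range k) < 2 ^ n :=
    (binVal_lt_two_pow_iff.2 subset_rfl).trans_le (Nat.pow_le_pow_right two_pos hk)
  rw [binVal_le_two_pow_add_iff hlt, colexLink, mem_union, mem_powersetCard, mem_singleton]
  refine or_congr (and_iff_left hB) ⟨?_, fun ⟨hn, h⟩ => ?_⟩
  · rintro rfl
    exact ⟨mem_insert_self n _, by rw [erase_insert (by simpa using hk)]⟩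
  · rw [← insert_erase hn,
      (binVal_le_binVal_range_iff (by rw [card_erase_of_mem hn, hB]; rfl)).1 h]

lemma mem_colexFamily_iff (hk : k ≤ n) {A : Finset ℕ} (hA : #A = k + 2) :
    A ∈ colexFamily n k ↔ binVal A ≤ 2 ^ (n + 1) + (2 ^ n + binVal (range k)) := by
  have hlt : 2 ^ n + binVal (range k) < 2 ^ (n + 1) := by
    have := (binVal_lt_two_pow_iff.2 subset_rfl).trans_le (Nat.pow_le_pow_right two_pos hk)
    rw [pow_succ]
    omega
  rw [binVal_le_two_pow_add_iff hlt, colexFamily, mem_union, mem_powersetCard,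
    mem_image_insert_iff fun e => notMem_of_mem_colexLink hk]
  refine or_congr (and_iff_left hA) (and_congr_right fun h => mem_colexLink_iff hk ?_)
  simp [card_erase_of_mem h, hA]

lemma card_colexFamily (hk : k ≤ n) :
    #(colexFamily n k) = (n + 1).choose (k + 2) + n.choose (k + 1) + 1 := by
  rw [colexFamily, card_union_of_disjoint
      (disjoint_image_insert fun e => notMem_of_mem_powersetCard (by simp)),
    card_image_of_injOn (injOn_insert fun e => notMem_of_mem_colexLink hk), colexLink,
    card_union_of_disjoint disjoint_powersetCard_range_insert]
  simp [add_assoc]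

lemma colexFamily_subset (hk : k ≤ n) :
    colexFamily n k ⊆ (range (n + 2)).powersetCard (k + 2) := by
  intro A hA
  rcases mem_union.1 hA with hA | hA
  · exact powersetCard_mono (range_subset_range.2 (by omega)) hA
  · obtain ⟨B, hB, rfl⟩ := mem_image.1 hA
    refine mem_powersetCard.2 ⟨insert_subset (by simp) ?_, ?_⟩
    · rcases mem_union.1 hB with hB | hB
      · exact (mem_powersetCard.1 hB).1.trans (range_subset_range.2 (by omega))
      · rw [mem_singleton.1 hB]
        exact insert_subset (by simp) (range_subset_range.2 (by omega))
    · rw [card_insert_of_notMem (notMem_of_mem_colexLink hk hB)]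
      rcases mem_union.1 hB with hB | hB
      · rw [(mem_powersetCard.1 hB).2]
      · rw [mem_singleton.1 hB, card_insert_of_notMem (by simpa using hk), card_range]

lemma le_add_choose_succ (hk : k ≤ n) : n ≤ k + n.choose (k + 1) := by
  rcases hk.eq_or_lt with rfl | hk
  · omega
  · have h := Nat.choose_le_choose (n - (k + 1)) (Nat.sub_le n k)
    rw [show n - k = n - (k + 1) + 1 by omega, Nat.choose_succ_self_right,
      Nat.choose_symm (show k + 1 ≤ n from hk)] at h
    omega

theorem colexGraph_eq_colexFamily (hk : k ≤ n) :
    colexGraph (k + 2) ((n + 1).choose (k + 2) + n.choose (k + 1) + 1) = colexFamily n k := by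
  have huniv : n + 2 ≤ k + 2 + ((n + 1).choose (k + 2) + n.choose (k + 1) + 1) := by
    have := le_add_choose_succ hk
    omega
  refine filter_card_filter_lt_eq_of_sublevel
    ((colexFamily_subset hk).trans (powersetCard_mono (range_subset_range.2 huniv)))
    (card_colexFamily hk) fun A hA => mem_colexFamily_iff hk (mem_powersetCard.1 hA).2

end ColexFamily

noncomputable def witnessWeighting (n i : ℕ) : ℝ :=
  if i < n then (n + 1 : ℝ)⁻¹ else if i < n + 2 then (n + 1 : ℝ)⁻¹ / 2 else 0

section WitnessWeighting

variable {n : ℕ}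

lemma witnessWeighting_of_lt {i : ℕ} (hi : i < n) : witnessWeighting n i = (n + 1 : ℝ)⁻¹ :=
  if_pos hi

lemma witnessWeighting_self : witnessWeighting n n = (n + 1 : ℝ)⁻¹ / 2 := by
  simp [witnessWeighting]

lemma witnessWeighting_succ : witnessWeighting n (n + 1) = (n + 1 : ℝ)⁻¹ / 2 := by
  simp [witnessWeighting]

lemma isWeighting_witnessWeighting (n : ℕ) : IsWeighting (n + 2) (witnessWeighting n) := by
  refine ⟨fun i => ?_, fun i hi => ?_, ?_⟩
  · unfold witnessWeighting
    split_ifs <;> positivity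
  · simp [witnessWeighting, show ¬i < n by omega, show ¬i < n + 2 by omega]
  · rw [sum_range_succ, sum_range_succ, witnessWeighting_self, witnessWeighting_succ,
      sum_congr rfl fun i hi => witnessWeighting_of_lt (mem_range.1 hi)]
    simp only [sum_const, card_range, nsmul_eq_mul]
    field_simp
    ring

lemma lagPoly_colexFamily_witnessWeighting {k : ℕ} (hk : k ≤ n) :
    lagPoly (colexFamily n k) (witnessWeighting n)
      = ((n + 1).choose (k + 2) + 1 / 4) * ((n + 1 : ℝ)⁻¹) ^ (k + 2) := by
  set x : ℝ := (n + 1 : ℝ)⁻¹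
  have hlow : ∀ i ∈ range n, witnessWeighting n i = x :=
    fun i hi => witnessWeighting_of_lt (mem_range.1 hi)
  have hcomplete (j : ℕ) : lagPoly ((range n).powersetCard j) (witnessWeighting n)
      = n.choose j * x ^ j := by
    simpa using lagPoly_powersetCard_of_eqOn hlow j
  have hlast : lagPoly {insert n (range k)} (witnessWeighting n) = x / 2 * x ^ k := by
    rw [lagPoly, sum_singleton, prod_insert (by simpa using hk), witnessWeighting_self,
      prod_congr rfl fun i hi => hlow i (range_subset_range.2 hk hi), prod_const, card_range]
  rw [colexFamily, lagPoly_union (disjoint_image_insert fun e => notMem_of_mem_powersetCard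
      (by simp)), lagPoly_image_insert fun e => notMem_of_mem_colexLink hk, range_add_one,
    lagPoly_powersetCard_succ_insert (by simp), colexLink,
    lagPoly_union disjoint_powersetCard_range_insert, hcomplete, hcomplete, hlast,
    witnessWeighting_self, witnessWeighting_succ, Nat.choose_succ_succ']
  push_cast
  ring

end WitnessWeighting

/-- For t ≥ r+1 and m = C(t-1,r) + C(t-2,r-1) + 1 we have λ(C_{r,m}) > λ([t-1]^{(r)}). -/
theorem stmt_6 (r t : ℕ) (hr : 2 ≤ r) (ht : r + 1 ≤ t) :
    lag (completeG (t - 1) r) <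
      lag (colexGraph r ((t - 1).choose r + (t - 2).choose (r - 1) + 1)) := by
  obtain ⟨k, rfl⟩ : ∃ k, r = k + 2 := ⟨r - 2, by omega⟩
  obtain ⟨n, rfl⟩ : ∃ n, t = n + 2 := ⟨t - 2, by omega⟩
  have hk : k ≤ n := by omega
  rw [show n + 2 - 1 = n + 1 by omega, show n + 2 - 2 = n by omega,
    show k + 2 - 1 = k + 1 by omega, colexGraph_eq_colexFamily hk]
  calc lag (completeG (n + 1) (k + 2))
      ≤ (n + 1).choose (k + 2) * ((n + 1 : ℝ)⁻¹) ^ (k + 2) := by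
        simpa using lag_completeG_le (n + 1) (k + 2)
    _ < ((n + 1).choose (k + 2) + 1 / 4) * ((n + 1 : ℝ)⁻¹) ^ (k + 2) := by
        gcongr
        linarith
    _ = lagPoly (colexFamily n k) (witnessWeighting n) :=
        (lagPoly_colexFamily_witnessWeighting hk).symm
    _ ≤ lag (colexFamily n k) := lagPoly_le_lag _ (isWeighting_witnessWeighting n)
end
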